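/- Define h : ℝ → ℝ by h(x) = 2(1 + 2cosh x)·sinh x / (2cosh x + cosh 2x). Then h(0) = 0, h is strictly increasing on [0, ∞), h(x) < 2 for all x ≥ 0, and h(x) → 2 as x → ∞. Consequently, for every integer k ≥ 2 there is no x > 0 with h(x) = k, and there is exactly one x > 0 with h(x) = 1. -/

import Mathlib

/-!
With `c = cosh x`, `s = sinh x` and `D = 2c + cosh 2x > 0`, the quotient rule gives
`h' = (8 + 8c + 2c·cosh 2x) / D² > 0`, and `cosh 2x = c² + s²`, `c - s = e^{-x}` give
`2D - 2(1 + 2c)s = 2e^{-2x} + 2e^{-x} + 2c > 0`, so `h < 2`. In the variable `v = e^{-x}`,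
`h` is a rational function of `v` taking the value `2` at `v = 0`, whence `h → 2`. The
intermediate value theorem and injectivity then give the unique solution of `h(x) = 1`.
-/

open Real

/-- The function `h(x) = 2(1 + 2cosh x)·sinh x / (2cosh x + cosh 2x)` from the
Bach-flatness condition on Hirzebruch surfaces. -/
noncomputable def hPage (x : ℝ) : ℝ :=
  2 * (1 + 2 * Real.cosh x) * Real.sinh x / (2 * Real.cosh x + Real.cosh (2*x))

open Filter Topology

theorem StrictMono.existsUnique_gt_eq_of_tendsto {f : ℝ → ℝ} (hf : StrictMono f)
    (hfc : Continuous f) {a y L : ℝ} (hL : Tendsto f atTop (𝓝 L)) (hay : f a < y)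
    (hyL : y < L) : ∃! x, a < x ∧ f x = y := by
  obtain ⟨b, hyb, hab⟩ := ((hL.eventually (eventually_gt_nhds hyL)).and
    (eventually_gt_atTop a)).exists
  obtain ⟨x, hx, hfx⟩ := intermediate_value_Ioo hab.le hfc.continuousOn ⟨hay, hyb⟩
  exact ⟨x, ⟨hx.1, hfx⟩, fun x' hx' => hf.injective (hx'.2.trans hfx.symm)⟩

lemma hPage_denom_pos (x : ℝ) : 0 < 2 * cosh x + cosh (2 * x) := by
  positivity

lemma hPage_hasDerivAt (x : ℝ) :
    HasDerivAt hPage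
      ((8 + 8 * cosh x + 2 * cosh x * cosh (2 * x)) / (2 * cosh x + cosh (2 * x)) ^ 2) x := by
  have hnum : HasDerivAt (fun x => 2 * (1 + 2 * cosh x) * sinh x)
      (2 * (2 * sinh x) * sinh x + 2 * (1 + 2 * cosh x) * cosh x) x :=
    (((hasDerivAt_cosh x).const_mul 2).const_add 1).const_mul 2 |>.mul (hasDerivAt_sinh x)
  have hden : HasDerivAt (fun x => 2 * cosh x + cosh (2 * x))
      (2 * sinh x + sinh (2 * x) * 2) x :=
    ((hasDerivAt_cosh x).const_mul 2).add
      ((hasDerivAt_cosh (2 * x)).comp x ((hasDerivAt_id x).const_mul 2 |>.congr_deriv (mul_one 2)))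
  refine (hnum.div hden (hPage_denom_pos x).ne').congr_deriv (congrArg (· / _) ?_)
  rw [cosh_two_mul, sinh_two_mul]
  linear_combination (4 * cosh x ^ 2 - 4 * sinh x ^ 2 + 8 + 8 * cosh x) * cosh_sq_sub_sinh_sq x

lemma hPage_strictMono : StrictMono hPage :=
  strictMono_of_hasDerivAt_pos hPage_hasDerivAt fun x => by positivity

lemma two_mul_denom_sub_num (x : ℝ) :
    2 * (2 * cosh x + cosh (2 * x)) - 2 * (1 + 2 * cosh x) * sinh x
      = 2 * exp (-x) ^ 2 + 2 * exp (-x) + 2 * cosh x := by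
  rw [← cosh_sub_sinh, cosh_two_mul]
  ring

lemma hPage_lt_two (x : ℝ) : hPage x < 2 := by
  rw [hPage, div_lt_iff₀ (hPage_denom_pos x)]
  have hgap : 0 < 2 * exp (-x) ^ 2 + 2 * exp (-x) + 2 * cosh x := by positivity
  linarith [two_mul_denom_sub_num x]

lemma hPage_eq_rational_exp_neg (x : ℝ) :
    hPage x = (exp (-x) + 1 + exp (-x) ^ 2) * (1 - exp (-x) ^ 2) /
      (exp (-x) + exp (-x) ^ 3 + 1 / 2 + exp (-x) ^ 4 / 2) := by
  have hexp2 : exp (2 * x) = exp x ^ 2 := by rw [two_mul, exp_add, sq]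
  rw [hPage, sinh_eq, cosh_eq, cosh_eq, hexp2, exp_neg, exp_neg, hexp2]
  have hexp : exp x ≠ 0 := (exp_pos x).ne'
  field_simp
  ring

lemma hPage_tendsto_two : Tendsto hPage atTop (𝓝 2) := by
  have hrat : ContinuousAt
      (fun v : ℝ => (v + 1 + v ^ 2) * (1 - v ^ 2) / (v + v ^ 3 + 1 / 2 + v ^ 4 / 2)) 0 := by
    fun_prop (disch := norm_num)
  have := hrat.tendsto.comp tendsto_exp_neg_atTop_nhds_zero
  norm_num at this
  exact this.congr fun x => (hPage_eq_rational_exp_neg x).symm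

/-- `h(0) = 0`, `h` is strictly increasing on `[0, ∞)`, `h < 2` there,
`h → 2` at `∞`; hence no `x > 0` has `h(x) = k` for an integer `k ≥ 2`, and there is
exactly one `x > 0` with `h(x) = 1`. -/
theorem hPage_properties :
    hPage 0 = 0 ∧
    StrictMonoOn hPage (Set.Ici (0 : ℝ)) ∧
    (∀ x : ℝ, 0 ≤ x → hPage x < 2) ∧
    Filter.Tendsto hPage Filter.atTop (nhds 2) ∧
    (∀ k : ℤ, 2 ≤ k → ¬∃ x : ℝ, 0 < x ∧ hPage x = (k : ℝ)) ∧
    (∃! x : ℝ, 0 < x ∧ hPage x = 1) := by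
  have hPage_zero : hPage 0 = 0 := by simp [hPage]
  refine ⟨hPage_zero, hPage_strictMono.strictMonoOn _, fun x _ => hPage_lt_two x,
    hPage_tendsto_two, ?_, ?_⟩
  · rintro k hk ⟨x, -, hxk⟩
    have hk2 : (k : ℝ) < 2 := hxk ▸ hPage_lt_two x
    exact hk.not_gt (by exact_mod_cast hk2)
  · have hcont : Continuous hPage :=
      continuous_iff_continuousAt.2 fun x => (hPage_hasDerivAt x).continuousAt
    exact hPage_strictMono.existsUnique_gt_eq_of_tendsto hcont hPage_tendsto_two
      (hPage_zero.trans_lt one_pos) one_lt_two
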